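/- Fix N ≥ 1 samples (x_1, y_1), …, (x_N, y_N) with y_j ∈ {0,1}, a finite index set C, real numbers c_k(x_j) ∈ [0,1] for each k ∈ C and j, base logits u_j ∈ ℝ, and ε > 0. Define σ(t) = 1/(1 + exp(−t)) and the regularized objective F : ℝ^C → ℝ by F(l) = (1/N) Σ_{j=1}^N [ −y_j log σ(u_j + Σ_{k∈C} l_k c_k(x_j)) − (1 − y_j) log(1 − σ(u_j + Σ_{k∈C} l_k c_k(x_j))) ] + ε · Σ_{k∈C} |l_k|. If l* ∈ ℝ^C is a global minimizer of F, then for every k ∈ C, |(1/N) Σ_{j=1}^N c_k(x_j) · ( σ(u_j + Σ_{k'∈C} l*_{k'} c_{k'}(x_j)) − y_j )| ≤ ε; that is, the post-processed predictor f*(x_j) = σ(u_j + Σ_{k∈C} l*_k c_k(x_j)) is (C, ε)-multi-accurate on the empirical distribution of the N samples. -/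

import Mathlib

/-!
Moving only the `k`-th coordinate of the minimiser, the objective becomes `φ t + ε |t|` plus a
constant, where `φ` is smooth. Since the cross-entropy `-y log σ s - (1 - y) log (1 - σ s)` has
derivative `σ s - y`, the derivative of `φ` at `l*_k` is exactly the `k`-th correlation. At a
minimum of `φ t + ε |t|` the one-sided difference quotients of `φ` are bounded by `-ε` from the
right and by `ε` from the left, which squeezes `φ'` into `[-ε, ε]`.
-/

open Real Finset Filter Topology Function

noncomputable def logisticLoss (y s : ℝ) : ℝ :=
  -y * log (sigmoid s) - (1 - y) * log (1 - sigmoid s)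

theorem hasDerivAt_logisticLoss (y s : ℝ) :
    HasDerivAt (logisticLoss y) (sigmoid s - y) s := by
  have hσ := hasDerivAt_sigmoid s
  have hσ_ne := (sigmoid_pos s).ne'
  have hσ_ne_one := (sub_pos.2 (sigmoid_lt_one s)).ne'
  refine (((hσ.log hσ_ne).const_mul (-y)).sub
    (((hσ.const_sub 1).log hσ_ne_one).const_mul (1 - y))).congr_deriv ?_
  field_simp
  ring

theorem hasDerivAt_sum_update_mul {ι : Type*} [Fintype ι] [DecidableEq ι]
    (x w : ι → ℝ) (i : ι) (t : ℝ) :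
    HasDerivAt (fun t => ∑ k, update x i t k * w k) (w i) t := by
  refine (HasDerivAt.fun_sum (u := univ) fun k _ =>
    (hasDerivAt_pi.1 (hasDerivAt_update x i t) k).mul_const (w k)).congr_deriv ?_
  simp [Pi.single_apply]

theorem sum_abs_update {ι : Type*} [Fintype ι] [DecidableEq ι] (x : ι → ℝ) (i : ι) (t : ℝ) :
    ∑ k, |update x i t k| = |t| + ∑ k ∈ univ \ {i}, |x k| := by
  have := sum_update_of_mem (mem_univ i) (abs ∘ x) |t|
  rwa [← comp_update] at this

theorem abs_le_of_isLocalMin_add_mul_abs_sub {φ : ℝ → ℝ} {D a ε : ℝ} (hφ : HasDerivAt φ D a)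
    (hmin : IsLocalMin (fun t => φ t + ε * |t - a|) a) : |D| ≤ ε := by
  have hslope := hasDerivAt_iff_tendsto_slope.mp hφ
  have hmin' : ∀ᶠ t in 𝓝 a, φ a ≤ φ t + ε * |t - a| := hmin.mono fun t ht => by simpa using ht
  refine abs_le.2 ⟨ge_of_tendsto (hslope.mono_left (nhdsGT_le_nhdsNE a)) ?_,
    le_of_tendsto (hslope.mono_left (nhdsLT_le_nhdsNE a)) ?_⟩
  · filter_upwards [nhdsWithin_le_nhds hmin', self_mem_nhdsWithin] with t ht (hat : a < t)
    rw [abs_of_pos (sub_pos.2 hat)] at ht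
    rw [slope_def_field, le_div_iff₀ (sub_pos.2 hat)]
    linarith
  · filter_upwards [nhdsWithin_le_nhds hmin', self_mem_nhdsWithin] with t ht (hta : t < a)
    rw [abs_of_neg (sub_neg.2 hta)] at ht
    rw [slope_def_field, div_le_iff_of_neg (sub_neg.2 hta)]
    linarith

theorem abs_le_of_isLocalMin_add_mul_abs {φ : ℝ → ℝ} {D a ε : ℝ} (hε : 0 ≤ ε)
    (hφ : HasDerivAt φ D a) (hmin : IsLocalMin (fun t => φ t + ε * |t|) a) : |D| ≤ ε := by
  refine abs_le_of_isLocalMin_add_mul_abs_sub hφ (hmin.mono fun t ht => ?_)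
  simp only [sub_self, abs_zero, mul_zero, add_zero] at ht ⊢
  linarith [mul_le_mul_of_nonneg_left (abs_sub_abs_le_abs_sub t a) hε]

theorem minimizer_is_multiaccurate_general
    {N : ℕ} {C : Type*} [Fintype C]
    (y : Fin N → ℝ)
    (c : C → Fin N → ℝ)
    (u : Fin N → ℝ) (ε : ℝ) (hε : 0 < ε)
    (σ : ℝ → ℝ) (hσ : ∀ t, σ t = 1 / (1 + Real.exp (-t)))
    (F : (C → ℝ) → ℝ)
    (hF : ∀ l : C → ℝ, F l =
      (1 / (N : ℝ)) * ∑ j, (-(y j) * Real.log (σ (u j + ∑ k, l k * c k j))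
        - (1 - y j) * Real.log (1 - σ (u j + ∑ k, l k * c k j)))
      + ε * ∑ k, |l k|)
    (lstar : C → ℝ) (hmin : ∀ l : C → ℝ, F lstar ≤ F l) :
    ∀ k : C,
      |(1 / (N : ℝ)) * ∑ j, c k j * (σ (u j + ∑ k', lstar k' * c k' j) - y j)| ≤ ε := by
  obtain rfl : σ = sigmoid := funext fun t => by rw [hσ, sigmoid_def, one_div]
  classical
  intro k
  set φ : ℝ → ℝ := fun t =>
    (1 / (N : ℝ)) * ∑ j, logisticLoss (y j) (u j + ∑ k', update lstar k t k' * c k' j)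
  have hF_update : ∀ t, F (update lstar k t)
      = φ t + ε * |t| + ε * ∑ k' ∈ univ \ {k}, |lstar k'| := by
    intro t
    rw [hF, sum_abs_update]
    unfold φ logisticLoss
    ring
  have hφ : HasDerivAt φ
      ((1 / (N : ℝ)) * ∑ j, c k j * (sigmoid (u j + ∑ k', lstar k' * c k' j) - y j)) (lstar k) := by
    refine ((HasDerivAt.fun_sum (u := univ) fun j _ =>
      (hasDerivAt_logisticLoss (y j) _).comp (lstar k)
        ((hasDerivAt_sum_update_mul lstar (c · j) k (lstar k)).const_add (u j))).const_mul
      (1 / (N : ℝ))).congr_deriv ?_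
    simp only [update_eq_self, mul_comm]
  refine abs_le_of_isLocalMin_add_mul_abs hε.le hφ (Eventually.of_forall fun t => ?_)
  have h0 := hF_update (lstar k)
  rw [update_eq_self] at h0
  linarith [hmin (update lstar k t), hF_update t]

/-- A global minimizer `l*` of the ℓ1-regularized logistic cross-entropy
objective yields a post-processed predictor
`f*(x_j) = σ(u_j + Σ_k l*_k c_k(x_j))` that is `(C, ε)`-multi-accurate on the
empirical distribution of the `N` samples. -/
theorem minimizer_is_multiaccurate
    {N : ℕ} (hN : 1 ≤ N) {C : Type*} [Fintype C]
    (y : Fin N → ℝ) (hy : ∀ j, y j = 0 ∨ y j = 1)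
    (c : C → Fin N → ℝ) (hc : ∀ k j, c k j ∈ Set.Icc (0 : ℝ) 1)
    (u : Fin N → ℝ) (ε : ℝ) (hε : 0 < ε)
    (σ : ℝ → ℝ) (hσ : ∀ t, σ t = 1 / (1 + Real.exp (-t)))
    (F : (C → ℝ) → ℝ)
    (hF : ∀ l : C → ℝ, F l =
      (1 / (N : ℝ)) * ∑ j, (-(y j) * Real.log (σ (u j + ∑ k, l k * c k j))
        - (1 - y j) * Real.log (1 - σ (u j + ∑ k, l k * c k j)))
      + ε * ∑ k, |l k|)
    (lstar : C → ℝ) (hmin : ∀ l : C → ℝ, F lstar ≤ F l) :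
    ∀ k : C,
      |(1 / (N : ℝ)) * ∑ j, c k j * (σ (u j + ∑ k', lstar k' * c k' j) - y j)| ≤ ε :=
  minimizer_is_multiaccurate_general y c u ε hε σ hσ F hF lstar hmin
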